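/- Let n ≥ 1, let 𝔥 ⊆ so(n) be a Lie subalgebra with derived subalgebra 𝔥′ and center z(𝔥), and let φ : 𝔥 → ℝ be a linear map with φ|_{𝔥′} = 0. Let 𝔥ol^{3,𝔥,φ} be as in the context. Then for every R ∈ 𝓡(𝔥ol^{3,𝔥,φ}) and all x, y ∈ span{X_1, …, X_n}, the middle n×n block of R(x,y) (which lies in 𝔥) is annihilated by φ: φ(pr_𝔥(R(x,y))) = 0. (This is the statement that the component R_1(X,Y) lies in ker φ for holonomy algebras of type 3.) -/

import Mathlib

attribute [local instance 100] LieRing.ofAssociativeRing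

def mid (n : ℕ) (i : Fin n) : Fin (n + 2) := ⟨(i : ℕ) + 1, by omega⟩

def lastIdx (n : ℕ) : Fin (n + 2) := ⟨n + 1, by omega⟩

/-- The Lorentzian bilinear form on `ℝ^{n+2}` with Gram matrix `[[0,0,1],[0,E_n,0],[1,0,0]]`
in the basis `U = e_0, X_1 = e_1, …, X_n = e_n, V = e_{n+1}`. -/
def eta (n : ℕ) (x y : Fin (n + 2) → ℝ) : ℝ :=
  x 0 * y (lastIdx n) + x (lastIdx n) * y 0 + ∑ i : Fin n, x (mid n i) * y (mid n i)


/-- The vector `U = e_0`. -/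
def Uvec (n : ℕ) : Fin (n + 2) → ℝ := Pi.single 0 1

/-- The vector `V = e_{n+1}`. -/
def Vvec (n : ℕ) : Fin (n + 2) → ℝ := Pi.single (lastIdx n) 1

/-- The set of basis vectors `X_1 = e_1, …, X_n = e_n`. -/
def Xset (n : ℕ) : Set (Fin (n + 2) → ℝ) := Set.range fun i : Fin n => Pi.single (mid n i) 1

/-- The `(i,j)` matrix entry of an endomorphism of `ℝ^{n+2}` in the standard basis
`U = e_0, X_1 = e_1, …, X_n = e_n, V = e_{n+1}`. -/
def entryE (n : ℕ) (M : Module.End ℝ (Fin (n + 2) → ℝ)) (i j : Fin (n + 2)) : ℝ :=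
  M (Pi.single j 1) i

/-- The holonomy algebra `𝔥ol^{3,𝔥,φ}` as a set of endomorphisms of `ℝ^{n+2}`: those whose
matrix in the basis `U, X_1, …, X_n, V` has block form
`[[φ(B), X, 0], [0, A + B, -Xᵗ], [0, 0, -φ(B)]]` with `X ∈ ℝⁿ`, `A ∈ 𝔥' = [𝔥,𝔥]`,
`B ∈ z(𝔥)`. -/
def hol3E (n : ℕ) (𝔥 : LieSubalgebra ℝ (Matrix (Fin n) (Fin n) ℝ)) (φ : 𝔥 →ₗ[ℝ] ℝ) :
    Set (Module.End ℝ (Fin (n + 2) → ℝ)) :=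
  {M | ∃ (X : Fin n → ℝ) (A B : 𝔥), A ∈ LieAlgebra.derivedSeries ℝ 𝔥 1 ∧
    B ∈ LieAlgebra.center ℝ 𝔥 ∧
    entryE n M 0 0 = φ B ∧ (∀ j, entryE n M 0 (mid n j) = X j) ∧
    entryE n M 0 (lastIdx n) = 0 ∧
    (∀ i, entryE n M (mid n i) 0 = 0) ∧
    (∀ i j, entryE n M (mid n i) (mid n j) =
      (A : Matrix (Fin n) (Fin n) ℝ) i j + (B : Matrix (Fin n) (Fin n) ℝ) i j) ∧
    (∀ i, entryE n M (mid n i) (lastIdx n) = -X i) ∧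
    entryE n M (lastIdx n) 0 = 0 ∧ (∀ j, entryE n M (lastIdx n) (mid n j) = 0) ∧
    entryE n M (lastIdx n) (lastIdx n) = -φ B}

/- ———————————————————————— auxiliary lemmas ———————————————————————— -/

lemma aux_zero_ne_lastIdx (n : ℕ) : (0 : Fin (n+2)) ≠ lastIdx n := by
  simp [lastIdx, Fin.ext_iff]

lemma aux_mid_ne_zero (n : ℕ) (i : Fin n) : mid n i ≠ 0 := by
  simp [mid, Fin.ext_iff]

lemma aux_mid_ne_lastIdx (n : ℕ) (i : Fin n) : mid n i ≠ lastIdx n := by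
  have := i.isLt
  simp only [mid, lastIdx, Fin.ext_iff, ne_eq]
  omega

lemma aux_eta_symm (n : ℕ) (a b : Fin (n+2) → ℝ) : eta n a b = eta n b a := by
  unfold eta
  rw [Finset.sum_congr rfl fun i _ => mul_comm (a (mid n i)) (b (mid n i))]
  ring

lemma aux_eta_add_left (n : ℕ) (a b c : Fin (n+2) → ℝ) :
    eta n (a + b) c = eta n a c + eta n b c := by
  unfold eta
  simp [add_mul, Finset.sum_add_distrib]
  ring

lemma aux_eta_neg_left (n : ℕ) (a c : Fin (n+2) → ℝ) : eta n (-a) c = -eta n a c := by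
  unfold eta
  simp [neg_mul, Finset.sum_neg_distrib]
  ring

lemma aux_eta_zero_left (n : ℕ) (c : Fin (n+2) → ℝ) : eta n 0 c = 0 := by
  simp [eta]

lemma aux_sum_decomp (n : ℕ) (g : Fin (n+2) → ℝ) :
    ∑ j, g j = g 0 + (∑ i : Fin n, g (mid n i)) + g (lastIdx n) := by
  rw [Fin.sum_univ_succ, Fin.sum_univ_castSucc]
  have h1 : ∀ i : Fin n, (Fin.castSucc i).succ = mid n i := fun i => by
    simp [mid, Fin.ext_iff]
  have h2 : (Fin.last n).succ = lastIdx n := by simp [lastIdx, Fin.ext_iff]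
  rw [h2, Finset.sum_congr rfl fun i _ => by rw [h1 i]]
  ring

lemma aux_apply_eq (n : ℕ) (M : Module.End ℝ (Fin (n+2) → ℝ)) (u : Fin (n+2) → ℝ)
    (i : Fin (n+2)) : M u i = ∑ j, entryE n M i j * u j := by
  have hu : u = ∑ j, u j • (Pi.single j (1:ℝ) : Fin (n+2) → ℝ) := by
    funext k
    simp [Finset.sum_apply, Pi.single_apply]
  conv_lhs => rw [hu]
  rw [map_sum]
  simp [entryE, Finset.sum_apply, mul_comm]

lemma aux_skewM (n : ℕ) (𝔥 : LieSubalgebra ℝ (Matrix (Fin n) (Fin n) ℝ))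
    (hskew : ∀ A ∈ 𝔥, A.transpose = -A) (φ : 𝔥 →ₗ[ℝ] ℝ)
    (M : Module.End ℝ (Fin (n + 2) → ℝ)) (hM : M ∈ hol3E n 𝔥 φ)
    (u v : Fin (n + 2) → ℝ) :
    eta n (M u) v = - eta n u (M v) := by
  obtain ⟨X, A, B, hA, hB, h00, h0m, h0L, hm0, hmm, hmL, hL0, hLm, hLL⟩ := hM
  set C : Matrix (Fin n) (Fin n) ℝ :=
    (A : Matrix (Fin n) (Fin n) ℝ) + (B : Matrix (Fin n) (Fin n) ℝ) with hCdef
  have hCskew : ∀ i j, C j i = -C i j := by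
    intro i j
    have h1 := hskew (A : Matrix (Fin n) (Fin n) ℝ) A.2
    have h2 := hskew (B : Matrix (Fin n) (Fin n) ℝ) B.2
    have e1 : (A : Matrix (Fin n) (Fin n) ℝ) j i = -(A : Matrix (Fin n) (Fin n) ℝ) i j := by
      have := congrFun (congrFun h1 i) j
      simpa [Matrix.transpose_apply] using this
    have e2 : (B : Matrix (Fin n) (Fin n) ℝ) j i = -(B : Matrix (Fin n) (Fin n) ℝ) i j := by
      have := congrFun (congrFun h2 i) j
      simpa [Matrix.transpose_apply] using this
    simp only [hCdef, Matrix.add_apply, e1, e2]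
    ring
  have hmmC : ∀ i j, entryE n M (mid n i) (mid n j) = C i j := by
    intro i j; rw [hmm i j]; simp [hCdef]
  have e0 : ∀ w : Fin (n+2) → ℝ,
      M w 0 = φ B * w 0 + ∑ i, X i * w (mid n i) := by
    intro w
    rw [aux_apply_eq, aux_sum_decomp n (fun j => entryE n M 0 j * w j)]
    simp only [h00, h0L, h0m, zero_mul, add_zero]
  have em : ∀ (w : Fin (n+2) → ℝ) (i : Fin n),
      M w (mid n i) = (∑ j, C i j * w (mid n j)) - X i * w (lastIdx n) := by
    intro w i
    rw [aux_apply_eq, aux_sum_decomp n (fun j => entryE n M (mid n i) j * w j)]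
    simp only [hm0 i, hmmC, hmL i, zero_mul, zero_add, neg_mul]
    ring
  have eL : ∀ w : Fin (n+2) → ℝ, M w (lastIdx n) = -(φ B * w (lastIdx n)) := by
    intro w
    rw [aux_apply_eq, aux_sum_decomp n (fun j => entryE n M (lastIdx n) j * w j)]
    simp only [hL0, hLm, hLL, zero_mul, zero_add, Finset.sum_const_zero, add_zero, neg_mul]
  have hs1 : ∑ i, ((∑ j, C i j * u (mid n j)) - X i * u (lastIdx n)) * v (mid n i)
      = (∑ i, ∑ j, C i j * u (mid n j) * v (mid n i))
        - (∑ i, X i * v (mid n i)) * u (lastIdx n) := by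
    rw [Finset.sum_mul, ← Finset.sum_sub_distrib]
    refine Finset.sum_congr rfl fun i _ => ?_
    rw [sub_mul, Finset.sum_mul]
    ring
  have hs2 : ∑ i, u (mid n i) * ((∑ j, C i j * v (mid n j)) - X i * v (lastIdx n))
      = (∑ i, ∑ j, C i j * u (mid n i) * v (mid n j))
        - (∑ i, X i * u (mid n i)) * v (lastIdx n) := by
    rw [Finset.sum_mul, ← Finset.sum_sub_distrib]
    refine Finset.sum_congr rfl fun i _ => ?_
    have h : ∀ j : Fin n, u (mid n i) * (C i j * v (mid n j))
        = C i j * u (mid n i) * v (mid n j) := fun j => by ring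
    rw [mul_sub, Finset.mul_sum, Finset.sum_congr rfl fun j _ => h j]
    ring
  have hs3 : (∑ i, ∑ j, C i j * u (mid n j) * v (mid n i))
      + (∑ i, ∑ j, C i j * u (mid n i) * v (mid n j)) = 0 := by
    rw [Finset.sum_comm (f := fun i j => C i j * u (mid n j) * v (mid n i)),
      ← Finset.sum_add_distrib]
    refine Finset.sum_eq_zero fun i _ => ?_
    rw [← Finset.sum_add_distrib]
    refine Finset.sum_eq_zero fun j _ => ?_
    rw [hCskew i j]
    ring
  unfold eta
  simp only [e0, em, eL]
  linear_combination hs1 + hs2 + hs3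

lemma aux_pair_symm {α : Type*} (S : α → α → α → α → ℝ)
    (h12 : ∀ a b c d, S a b c d = -S b a c d)
    (h34 : ∀ a b c d, S a b c d = -S a b d c)
    (hB : ∀ a b c d, S a b c d + S b c a d + S c a b d = 0)
    (x y z w : α) : S x y z w = S z w x y := by
  linarith [hB x y z w, hB y z w x, hB z w x y, hB w x y z,
    h34 y z w x, h34 z w x y, h12 w y z x, h34 y w z x,
    h12 x z w y, h34 z x y w, h34 w x y z, h34 x y z w]

/-- for every curvature tensor `R ∈ 𝓡(𝔥ol^{3,𝔥,φ})` and all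
`x, y ∈ span{X_1, …, X_n}`, the middle `n×n` block of `R(x,y)` is annihilated by `φ`
(the component `R_1(X,Y)` lies in `ker φ` for holonomy algebras of type 3). -/
theorem statement18 (n : ℕ) (hn : 1 ≤ n)
    (𝔥 : LieSubalgebra ℝ (Matrix (Fin n) (Fin n) ℝ))
    (hskew : ∀ A ∈ 𝔥, A.transpose = -A)
    (φ : 𝔥 →ₗ[ℝ] ℝ)
    (hφ : ∀ A ∈ LieAlgebra.derivedSeries ℝ 𝔥 1, φ A = 0)
    (R : (Fin (n + 2) → ℝ) →ₗ[ℝ] (Fin (n + 2) → ℝ) →ₗ[ℝ] Module.End ℝ (Fin (n + 2) → ℝ))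
    (hRval : ∀ u v, R u v ∈ hol3E n 𝔥 φ)
    (hRanti : ∀ u v, R u v = -R v u)
    (hRBianchi : ∀ u v w, R u v w + R v w u + R w u v = 0) :
    ∀ x ∈ Submodule.span ℝ (Xset n), ∀ y ∈ Submodule.span ℝ (Xset n),
      ∀ hm : (Matrix.of fun i j => entryE n (R x y) (mid n i) (mid n j)) ∈ 𝔥,
        φ ⟨Matrix.of fun i j => entryE n (R x y) (mid n i) (mid n j), hm⟩ = 0 := by
  intro x hx y hy hm
  -- vanishing of the `U` and `V` coordinates on the span of the `X_i`
  have hspan : ∀ z ∈ Submodule.span ℝ (Xset n), z 0 = 0 ∧ z (lastIdx n) = 0 := by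
    intro z hz
    induction hz using Submodule.span_induction with
    | mem w hw =>
      obtain ⟨i, rfl⟩ := hw
      refine ⟨Pi.single_eq_of_ne (Ne.symm (aux_mid_ne_zero n i)) 1,
        Pi.single_eq_of_ne (Ne.symm (aux_mid_ne_lastIdx n i)) 1⟩
    | zero => simp
    | add a b _ _ ha hb => exact ⟨by simp [ha.1, hb.1], by simp [ha.2, hb.2]⟩
    | smul r a _ ha => exact ⟨by simp [ha.1], by simp [ha.2]⟩
  obtain ⟨hx0, hxL⟩ := hspan x hx
  obtain ⟨hy0, hyL⟩ := hspan y hy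
  set U : Fin (n+2) → ℝ := Pi.single 0 1 with hU
  set Vv : Fin (n+2) → ℝ := Pi.single (lastIdx n) 1 with hV
  -- the quadrilinear form and its symmetries
  have h12 : ∀ a b c d, eta n (R a b c) d = -eta n (R b a c) d := by
    intro a b c d
    rw [hRanti a b]
    simp only [LinearMap.neg_apply]
    rw [aux_eta_neg_left]
  have h34 : ∀ a b c d, eta n (R a b c) d = -eta n (R a b d) c := by
    intro a b c d
    rw [aux_skewM n 𝔥 hskew φ (R a b) (hRval a b) c d, aux_eta_symm]
  have hBI : ∀ a b c d, eta n (R a b c) d + eta n (R b c a) d + eta n (R c a b) d = 0 := by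
    intro a b c d
    rw [← aux_eta_add_left, ← aux_eta_add_left, hRBianchi a b c, aux_eta_zero_left]
  have hps : ∀ a b c d, eta n (R a b c) d = eta n (R c d a) b :=
    aux_pair_symm (fun a b c d => eta n (R a b c) d) h12 h34 hBI
  -- Step A : the (0,0) entry equals η(R(x,y)U, V)
  have hA : eta n (R x y U) Vv = entryE n (R x y) 0 0 := by
    unfold eta
    have e1 : Vv (lastIdx n) = 1 := by rw [hV]; exact Pi.single_eq_same _ _
    have e2 : Vv 0 = 0 := by rw [hV]; exact Pi.single_eq_of_ne (aux_zero_ne_lastIdx n) 1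
    have e3 : ∀ i, Vv (mid n i) = 0 := fun i => by
      rw [hV]; exact Pi.single_eq_of_ne (aux_mid_ne_lastIdx n i) 1
    rw [e1, e2, Finset.sum_eq_zero fun i _ => by rw [e3 i, mul_zero]]
    show R x y U 0 * 1 + R x y U (lastIdx n) * 0 + 0 = entryE n (R x y) 0 0
    have : R x y U 0 = entryE n (R x y) 0 0 := rfl
    rw [this]
    ring
  -- Step z1 : η(R(V,x)U, y) = 0
  have hz1 : eta n (R Vv x U) y = 0 := by
    obtain ⟨X1, A1, B1, _, _, _, _, _, hm0a, _, _, hL0a, _, _⟩ := hRval Vv x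
    unfold eta
    rw [hyL]
    rw [show R Vv x U (lastIdx n) = 0 from hL0a]
    rw [Finset.sum_eq_zero fun i _ => by
      rw [show R Vv x U (mid n i) = 0 from hm0a i, zero_mul]]
    ring
  -- Step z3 : η(R(y,V)x, U) = 0
  have hz3 : eta n (R y Vv x) U = 0 := by
    obtain ⟨X2, A2, B2, _, _, _, _, _, _, _, _, hL0b, hLmb, hLLb⟩ := hRval y Vv
    unfold eta
    have e1 : U (lastIdx n) = 0 := by rw [hU]; exact Pi.single_eq_of_ne (Ne.symm (aux_zero_ne_lastIdx n)) 1
    have e3 : ∀ i, U (mid n i) = 0 := fun i => by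
      rw [hU]; exact Pi.single_eq_of_ne (aux_mid_ne_zero n i) 1
    rw [e1, Finset.sum_eq_zero fun i _ => by rw [e3 i, mul_zero]]
    have hlast : R y Vv x (lastIdx n) = 0 := by
      rw [aux_apply_eq n (R y Vv) x (lastIdx n),
        aux_sum_decomp n (fun j => entryE n (R y Vv) (lastIdx n) j * x j)]
      rw [hL0b, hxL, Finset.sum_eq_zero fun j _ => by rw [hLmb j, zero_mul]]
      ring
    rw [hlast]
    ring
  -- the chain:  entry00 = S x y U V = S U V x y = -S V x U y - S x U V y
  --           = S x U y V = S y V x U = 0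
  have hmain : entryE n (R x y) 0 0 = 0 := by
    have c1 : eta n (R x y U) Vv = eta n (R U Vv x) y := hps x y U Vv
    have c2 := hBI U Vv x y
    have c3 : eta n (R x U Vv) y = -eta n (R x U y) Vv := h34 x U Vv y
    have c4 : eta n (R x U y) Vv = eta n (R y Vv x) U := hps x U y Vv
    rw [← hA]
    linarith [c1, c2, c3, c4, hz1, hz3]
  -- conclude
  obtain ⟨X0, A0, B0, hA0, hB0, h00, _, _, _, hmm0, _, _, _, _⟩ := hRval x y
  have hsub : (⟨Matrix.of fun i j => entryE n (R x y) (mid n i) (mid n j), hm⟩ : 𝔥)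
      = A0 + B0 := by
    apply Subtype.ext
    show (Matrix.of fun i j => entryE n (R x y) (mid n i) (mid n j))
      = ((A0 + B0 : 𝔥) : Matrix (Fin n) (Fin n) ℝ)
    ext i j
    simp [hmm0 i j]
  rw [hsub, map_add, hφ A0 hA0, zero_add, ← h00, hmain]
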